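/- arXiv:1912.03127 — 2 statements merged into one kernel-verified Lean document; each statement's English description precedes it below -/
import Mathlib

section
/- For every integer ℓ ≥ 3, consider the graph G_ℓ constructed as follows: take vertices u, v, w₁,...,w_ℓ, a₁,...,a_ℓ, b₁,...,b_ℓ, with triangles {u, aᵢ, wᵢ} and {wᵢ, bᵢ, v} for each i (i.e., edges u aᵢ, u wᵢ, aᵢ wᵢ, wᵢ bᵢ, wᵢ v, bᵢ v). Then: (a) {u, v} is a dominating set of G_ℓ, so γ(G_ℓ) ≤ 2; (b) the set D = {w₁,...,w_ℓ} is a dominating set of size ℓ; (c) for every vertex wᵢ and every neighbor z of wᵢ, (D \ {wᵢ}) ∪ {z} is not a dominating set of G_ℓ. -/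
/-- The vertices of the graph `G_ℓ`: the hubs `u` and `v`, the shared triangle
vertices `w i`, and the private triangle vertices `a i` and `b i`. -/
inductive GVert (ℓ : ℕ) : Type
  | u : GVert ℓ
  | v : GVert ℓ
  | w : Fin ℓ → GVert ℓ
  | a : Fin ℓ → GVert ℓ
  | b : Fin ℓ → GVert ℓ
  deriving DecidableEq, Fintype

/-- The edges of `G_ℓ`: triangles `{u, a i, w i}` and `{w i, b i, v}` for each `i`. -/
def GRel (ℓ : ℕ) : GVert ℓ → GVert ℓ → Prop := fun x y =>
  ∃ i : Fin ℓ,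
    (x = .u ∧ y = .a i) ∨ (x = .u ∧ y = .w i) ∨ (x = .a i ∧ y = .w i) ∨
    (x = .w i ∧ y = .b i) ∨ (x = .w i ∧ y = .v) ∨ (x = .b i ∧ y = .v)

/-- The graph `G_ℓ`: `ℓ` pairs of triangles sharing `w i`, all first triangles sharing `u`
and all second triangles sharing `v`. -/
def Gl (ℓ : ℕ) : SimpleGraph (GVert ℓ) := SimpleGraph.fromRel (GRel ℓ)

def IsDominatingSet {V : Type*} (G : SimpleGraph V) (D : Set V) : Prop :=
  ∀ x : V, ∃ d ∈ D, d = x ∨ G.Adj d x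

noncomputable def dominationNumber (V : Type*) [Fintype V] (G : SimpleGraph V) : ℕ :=
  sInf {n : ℕ | ∃ D : Finset V, IsDominatingSet G ↑D ∧ D.card = n}

lemma not_adj_w_b {ℓ : ℕ} {j i : Fin ℓ} (h : j ≠ i) :
    ¬ (Gl ℓ).Adj (GVert.w j) (GVert.b i) := by
  simp [Gl, GRel]; omega
lemma not_adj_w_a {ℓ : ℕ} {j i : Fin ℓ} (h : j ≠ i) :
    ¬ (Gl ℓ).Adj (GVert.w j) (GVert.a i) := by
  simp [Gl, GRel]; omega
lemma not_adj_u_b {ℓ : ℕ} (i : Fin ℓ) : ¬ (Gl ℓ).Adj GVert.u (GVert.b i) := by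
  simp [Gl, GRel]
lemma not_adj_v_a {ℓ : ℕ} (i : Fin ℓ) : ¬ (Gl ℓ).Adj GVert.v (GVert.a i) := by
  simp [Gl, GRel]
lemma not_adj_a_b {ℓ : ℕ} (j i : Fin ℓ) : ¬ (Gl ℓ).Adj (GVert.a j) (GVert.b i) := by
  simp [Gl, GRel]
lemma not_adj_b_a {ℓ : ℕ} (j i : Fin ℓ) : ¬ (Gl ℓ).Adj (GVert.b j) (GVert.a i) := by
  simp [Gl, GRel]
lemma adj_w_cases {ℓ : ℕ} {i : Fin ℓ} {z : GVert ℓ} (h : (Gl ℓ).Adj (GVert.w i) z) :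
    z = GVert.u ∨ z = GVert.v ∨ z = GVert.a i ∨ z = GVert.b i := by
  cases z <;> simp_all [Gl, GRel]

theorem Gl_frozen_dominating_set (ℓ : ℕ) (hℓ : 3 ≤ ℓ) :
    IsDominatingSet (Gl ℓ) {GVert.u, GVert.v} ∧
    dominationNumber (GVert ℓ) (Gl ℓ) ≤ 2 ∧
    IsDominatingSet (Gl ℓ) (Set.range (GVert.w : Fin ℓ → GVert ℓ)) ∧
    (Set.range (GVert.w : Fin ℓ → GVert ℓ)).ncard = ℓ ∧
    ∀ i : Fin ℓ, ∀ z : GVert ℓ, (Gl ℓ).Adj (GVert.w i) z →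
      ¬ IsDominatingSet (Gl ℓ)
          ((Set.range (GVert.w : Fin ℓ → GVert ℓ) \ {GVert.w i}) ∪ {z}) := by
  have hpos : 0 < ℓ := by omega
  have h1 : IsDominatingSet (Gl ℓ) {GVert.u, GVert.v} := by
    intro x
    cases x with
    | u => exact ⟨.u, Or.inl rfl, Or.inl rfl⟩
    | v => exact ⟨.v, Or.inr rfl, Or.inl rfl⟩
    | w i => exact ⟨.u, Or.inl rfl, Or.inr ⟨by simp, Or.inl ⟨i, by simp⟩⟩⟩
    | a i => exact ⟨.u, Or.inl rfl, Or.inr ⟨by simp, Or.inl ⟨i, by simp⟩⟩⟩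
    | b i => exact ⟨.v, Or.inr rfl, Or.inr ⟨by simp, Or.inr ⟨i, by simp⟩⟩⟩
  refine ⟨h1, ?_, ?_, ?_, ?_⟩
  · apply Nat.sInf_le
    refine ⟨{GVert.u, GVert.v}, ?_, ?_⟩
    · simpa using h1
    · simp
  · intro x
    cases x with
    | u =>
        exact ⟨.w ⟨0, hpos⟩, ⟨⟨0, hpos⟩, rfl⟩,
          Or.inr ⟨by simp, Or.inr ⟨⟨0, hpos⟩, by simp⟩⟩⟩
    | v =>
        exact ⟨.w ⟨0, hpos⟩, ⟨⟨0, hpos⟩, rfl⟩,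
          Or.inr ⟨by simp, Or.inl ⟨⟨0, hpos⟩, by simp⟩⟩⟩
    | w i => exact ⟨.w i, ⟨i, rfl⟩, Or.inl rfl⟩
    | a i => exact ⟨.w i, ⟨i, rfl⟩, Or.inr ⟨by simp, Or.inr ⟨i, by simp⟩⟩⟩
    | b i => exact ⟨.w i, ⟨i, rfl⟩, Or.inr ⟨by simp, Or.inl ⟨i, by simp⟩⟩⟩
  · have hinj : Function.Injective (GVert.w : Fin ℓ → GVert ℓ) := by
      intro i j h
      injection h
    rw [← Nat.card_coe_set_eq, Nat.card_range_of_injective hinj,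
      Nat.card_eq_fintype_card, Fintype.card_fin]
  · intro i z hz hdom
    have key : ∀ t : GVert ℓ,
        (∃ d ∈ (Set.range (GVert.w : Fin ℓ → GVert ℓ) \ {GVert.w i} ∪ {z}),
          d = t ∨ (Gl ℓ).Adj d t) →
        (z = t ∨ (Gl ℓ).Adj z t ∨
          ∃ j : Fin ℓ, j ≠ i ∧ (GVert.w j = t ∨ (Gl ℓ).Adj (GVert.w j) t)) := by
      intro t ⟨d, hd, hc⟩
      simp only [Set.mem_union, Set.mem_diff, Set.mem_range, Set.mem_singleton_iff] at hd
      rcases hd with ⟨⟨j, rfl⟩, hji⟩ | rfl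
      · exact Or.inr (Or.inr ⟨j, fun h => hji (by rw [h]), hc⟩)
      · tauto
    rcases adj_w_cases hz with rfl | rfl | rfl | rfl
    · -- z = u : b i is undominated
      rcases key (GVert.b i) (hdom _) with h | h | ⟨j, hji, h | h⟩
      · exact nomatch h
      · exact not_adj_u_b i h
      · exact nomatch h
      · exact not_adj_w_b hji h
    · -- z = v : a i is undominated
      rcases key (GVert.a i) (hdom _) with h | h | ⟨j, hji, h | h⟩
      · exact nomatch h
      · exact not_adj_v_a i h
      · exact nomatch h
      · exact not_adj_w_a hji h
    · -- z = a i : b i is undominated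
      rcases key (GVert.b i) (hdom _) with h | h | ⟨j, hji, h | h⟩
      · exact nomatch h
      · exact not_adj_a_b i i h
      · exact nomatch h
      · exact not_adj_w_b hji h
    · -- z = b i : a i is undominated
      rcases key (GVert.a i) (hdom _) with h | h | ⟨j, hji, h | h⟩
      · exact nomatch h
      · exact not_adj_b_a i i h
      · exact nomatch h
      · exact not_adj_w_a hji h
end

section
/- With G_ℓ as above (ℓ ≥ 3), every dominating set of G_ℓ of size strictly less than ℓ contains both u and v. -/
theorem IsDominatingSet.card_le_card {V ι : Type*} [Fintype ι] {G : SimpleGraph V}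
    {D : Finset V} (hD : IsDominatingSet G ↑D) (x : ι → V)
    (hx : ∀ d ∈ D, ∀ i j, (d = x i ∨ G.Adj d (x i)) → (d = x j ∨ G.Adj d (x j)) → i = j) :
    Fintype.card ι ≤ D.card := by
  choose f hfD hf using fun i => hD (x i)
  have hinj : Function.Injective f := fun i j hij =>
    hx (f i) (hfD i) i j (hf i) (hij ▸ hf j)
  rw [← Finset.card_univ]
  exact Finset.card_le_card_of_injOn f (fun i _ => hfD i) hinj.injOn

namespace Gl

variable {ℓ : ℕ}

theorem eq_or_adj_a {d : GVert ℓ} {i : Fin ℓ} (h : d = .a i ∨ (Gl ℓ).Adj d (.a i)) :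
    d = .u ∨ d = .a i ∨ d = .w i := by
  simp only [Gl, GRel, SimpleGraph.fromRel_adj] at h
  aesop

theorem eq_or_adj_b {d : GVert ℓ} {i : Fin ℓ} (h : d = .b i ∨ (Gl ℓ).Adj d (.b i)) :
    d = .v ∨ d = .b i ∨ d = .w i := by
  simp only [Gl, GRel, SimpleGraph.fromRel_adj] at h
  aesop

theorem le_card_of_u_notMem {D : Finset (GVert ℓ)} (hD : IsDominatingSet (Gl ℓ) ↑D)
    (hu : GVert.u ∉ D) : ℓ ≤ D.card := by
  simpa using hD.card_le_card GVert.a fun d hd i j hi hj => by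
    have hj := eq_or_adj_a hj
    rcases eq_or_adj_a hi with rfl | rfl | rfl <;> simp_all

theorem le_card_of_v_notMem {D : Finset (GVert ℓ)} (hD : IsDominatingSet (Gl ℓ) ↑D)
    (hv : GVert.v ∉ D) : ℓ ≤ D.card := by
  simpa using hD.card_le_card GVert.b fun d hd i j hi hj => by
    have hj := eq_or_adj_b hj
    rcases eq_or_adj_b hi with rfl | rfl | rfl <;> simp_all

end Gl

theorem Gl_small_dominating_contains_hubs_general (ℓ : ℕ)
    (D : Finset (GVert ℓ)) (hD : IsDominatingSet (Gl ℓ) ↑D) (hcard : D.card < ℓ) :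
    GVert.u ∈ D ∧ GVert.v ∈ D := by
  constructor
  · by_contra hu
    exact (Gl.le_card_of_u_notMem hD hu).not_gt hcard
  · by_contra hv
    exact (Gl.le_card_of_v_notMem hD hv).not_gt hcard

theorem Gl_small_dominating_contains_hubs (ℓ : ℕ) (hℓ : 3 ≤ ℓ)
    (D : Finset (GVert ℓ)) (hD : IsDominatingSet (Gl ℓ) ↑D) (hcard : D.card < ℓ) :
    GVert.u ∈ D ∧ GVert.v ∈ D :=
  Gl_small_dominating_contains_hubs_general ℓ D hD hcard
end
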